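/- arXiv:2507.18953 — 2 statements merged into one kernel-verified Lean document; each statement's English description precedes it below -/
import Mathlib

section
/- Let d be an integer whose square root is irrational, let s ∈ ℂ be a fixed square root of d, and let K = ℚ(s) = { a + b·s : a, b ∈ ℚ } ⊆ ℂ, with conjugation automorphism defined by (a + b·s)‾ = a − b·s for a, b ∈ ℚ. Let f : K → K be an SD map. Then either f is the identity map (f(z) = z for all z ∈ K) or f is the conjugation map (f(z) = z‾ for all z ∈ K). -/
/-- The subfield `ℚ(s) = { a + b·s : a, b ∈ ℚ }` of `ℂ`, as a set. -/
def ratAdjoin (s : ℂ) : Set ℂ :=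
  {z : ℂ | ∃ a b : ℚ, z = (a : ℂ) + (b : ℂ) * s}

theorem sd_map_quadratic_field_id_or_conj (d : ℤ) (hd : ¬∃ q : ℚ, q ^ 2 = (d : ℚ))
    (s : ℂ) (hs : s ^ 2 = (d : ℂ))
    (f : ℂ → ℂ)
    (hmap : ∀ z ∈ ratAdjoin s, f z ∈ ratAdjoin s)
    (hSD : ∀ x ∈ ratAdjoin s, ∀ y ∈ ratAdjoin s, x ≠ y →
      f x ≠ f y ∧ f ((x + y) / (x - y)) = (f x + f y) / (f x - f y)) :
    (∀ z ∈ ratAdjoin s, f z = z) ∨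
    (∀ a b : ℚ, f ((a : ℂ) + (b : ℂ) * s) = (a : ℂ) - (b : ℂ) * s) := by
  -- basic membership lemmas
  have hmem_rat : ∀ q : ℚ, (q : ℂ) ∈ ratAdjoin s := fun q => ⟨q, 0, by push_cast; ring⟩
  have hmem_s : s ∈ ratAdjoin s := ⟨0, 1, by push_cast; ring⟩
  have h0K : (0 : ℂ) ∈ ratAdjoin s := by simpa using hmem_rat 0
  have h1K : (1 : ℂ) ∈ ratAdjoin s := by simpa using hmem_rat 1
  have h2K : (2 : ℂ) ∈ ratAdjoin s := by simpa using hmem_rat 2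
  have h3K : (3 : ℂ) ∈ ratAdjoin s := by simpa using hmem_rat 3
  have hmem_add : ∀ x ∈ ratAdjoin s, ∀ y ∈ ratAdjoin s, x + y ∈ ratAdjoin s := by
    rintro x ⟨a, b, rfl⟩ y ⟨a', b', rfl⟩
    exact ⟨a + a', b + b', by push_cast; ring⟩
  have hmem_neg : ∀ x ∈ ratAdjoin s, -x ∈ ratAdjoin s := by
    rintro x ⟨a, b, rfl⟩
    exact ⟨-a, -b, by push_cast; ring⟩
  have hmem_sub : ∀ x ∈ ratAdjoin s, ∀ y ∈ ratAdjoin s, x - y ∈ ratAdjoin s := by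
    intro x hx y hy
    have := hmem_add x hx (-y) (hmem_neg y hy)
    simpa [sub_eq_add_neg] using this
  have hmem_mul : ∀ x ∈ ratAdjoin s, ∀ y ∈ ratAdjoin s, x * y ∈ ratAdjoin s := by
    rintro x ⟨a, b, rfl⟩ y ⟨a', b', rfl⟩
    exact ⟨a * a' + b * b' * d, a * b' + a' * b, by push_cast; linear_combination (b : ℂ) * (b' : ℂ) * hs⟩
  have hlin : ∀ a b : ℚ, (a : ℂ) + (b : ℂ) * s = 0 → a = 0 ∧ b = 0 := by
    intro a b h
    by_cases hb : b = 0
    · subst hb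
      simp only [Rat.cast_zero, zero_mul, add_zero] at h
      exact ⟨by exact_mod_cast h, rfl⟩
    · exfalso
      have hbC : (b : ℂ) ≠ 0 := by exact_mod_cast hb
      have hsr : s = ((-a / b : ℚ) : ℂ) := by
        push_cast
        field_simp
        linear_combination h
      apply hd
      refine ⟨-a / b, ?_⟩
      have : (((-a / b : ℚ) : ℂ)) ^ 2 = ((d : ℚ) : ℂ) := by
        rw [← hsr]; rw [hs]; push_cast; ring
      exact_mod_cast this
  have hdQ : (d : ℚ) ≠ 0 := by
    intro h
    exact hd ⟨0, by rw [h]; norm_num⟩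
  have hs0 : s ≠ 0 := by
    intro h
    apply hdQ
    have : ((d : ℚ) : ℂ) = 0 := by push_cast; rw [← hs, h]; ring
    exact_mod_cast this
  have hmem_inv : ∀ x ∈ ratAdjoin s, x⁻¹ ∈ ratAdjoin s := by
    rintro x ⟨a, b, rfl⟩
    by_cases hx : (a : ℂ) + (b : ℂ) * s = 0
    · rw [hx]; simpa using h0K
    · have hconj : ((a : ℂ) + (b : ℂ) * s) * ((a : ℂ) - (b : ℂ) * s)
          = (((a ^ 2 - b ^ 2 * d : ℚ)) : ℂ) := by
        push_cast
        linear_combination (-(b : ℂ) ^ 2) * hs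
      have hDne : (((a ^ 2 - b ^ 2 * d : ℚ)) : ℂ) ≠ 0 := by
        intro h0
        rw [h0] at hconj
        rcases mul_eq_zero.mp hconj with h | h
        · exact hx h
        · have h2 := hlin a (-b) (by push_cast; linear_combination h)
          apply hx
          rw [h2.1]
          have hb0 : b = 0 := by simpa using h2.2
          rw [hb0]
          simp
      have hDQ : (a ^ 2 - b ^ 2 * d : ℚ) ≠ 0 := by exact_mod_cast hDne
      refine ⟨a / (a ^ 2 - b ^ 2 * d), -b / (a ^ 2 - b ^ 2 * d), ?_⟩
      apply inv_eq_of_mul_eq_one_right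
      have hDC : (a:ℂ)^2 - (b:ℂ)^2*(d:ℂ) ≠ 0 := by push_cast at hDne; exact hDne
      push_cast
      field_simp [hDC]
      linear_combination (-(b:ℂ)^2) * hs
  have hmem_div : ∀ x ∈ ratAdjoin s, ∀ y ∈ ratAdjoin s, x / y ∈ ratAdjoin s := by
    intro x hx y hy
    rw [div_eq_mul_inv]
    exact hmem_mul x hx y⁻¹ (hmem_inv y hy)
  -- injectivity
  have hinj : ∀ x ∈ ratAdjoin s, ∀ y ∈ ratAdjoin s, f x = f y → x = y := by
    intro x hx y hy h
    by_contra hne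
    exact (hSD x hx y hy hne).1 h
  -- oddness
  have hodd' : ∀ x ∈ ratAdjoin s, x ≠ 1 → f (-x) = -f x := by
    intro x hx hx1
    have hx1' : x - 1 ≠ 0 := sub_ne_zero.mpr hx1
    have huK : (x + 1) / (x - 1) ∈ ratAdjoin s :=
      hmem_div _ (hmem_add x hx 1 h1K) _ (hmem_sub x hx 1 h1K)
    set u := (x + 1) / (x - 1) with hu
    have hu1 : u ≠ 1 := by
      intro h
      rw [hu, div_eq_one_iff_eq hx1'] at h
      have : (1 : ℂ) = -1 := by linear_combination h
      norm_num at this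
    have hu1' : u - 1 ≠ 0 := sub_ne_zero.mpr hu1
    have e1 := (hSD u huK 1 h1K hu1).2
    have e2 := (hSD 1 h1K u huK hu1.symm).2
    have hne1 : f u - f 1 ≠ 0 := sub_ne_zero.mpr (hSD u huK 1 h1K hu1).1
    have hxu' : u + 1 = x * (u - 1) := by
      rw [hu]
      field_simp
      ring
    have hxu : (u + 1) / (u - 1) = x := by
      rw [div_eq_iff hu1']
      exact hxu'
    have hne2 : f 1 - f u ≠ 0 := fun h => hne1 (by linear_combination -h)
    have hxu2 : (1 + u) / (1 - u) = -x := by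
      rw [div_eq_iff (sub_ne_zero.mpr (Ne.symm hu1))]
      linear_combination hxu'
    rw [hxu] at e1
    rw [hxu2] at e2
    rw [e2, e1, ← div_neg, div_eq_div_iff hne2 (neg_ne_zero.mpr hne1)]
    ring
  have hodd : ∀ x ∈ ratAdjoin s, f (-x) = -f x := by
    intro x hx
    by_cases hx1 : x = 1
    · subst hx1
      have h := hodd' (-1) (hmem_neg 1 h1K) (by norm_num)
      rw [neg_neg] at h
      linear_combination h
    · exact hodd' x hx hx1
  have hf0 : f 0 = 0 := by
    have h := hodd 0 h0K
    rw [neg_zero] at h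
    have : (2 : ℂ) * f 0 = 0 := by linear_combination h
    simpa using this
  have hfne0 : ∀ x ∈ ratAdjoin s, x ≠ 0 → f x ≠ 0 := by
    intro x hx hx0
    have := (hSD x hx 0 h0K hx0).1
    rwa [hf0] at this
  have hf1 : f 1 = 1 := by
    have h := (hSD 2 h2K 0 h0K two_ne_zero).2
    rw [hf0] at h
    norm_num at h
    rw [h]
    exact div_self (hfne0 2 h2K two_ne_zero)
  have hfm1 : f (-1) = -1 := by
    have := hodd 1 h1K
    rw [this, hf1]
  -- multiplicativity of quotients
  have hdiv : ∀ x ∈ ratAdjoin s, ∀ y ∈ ratAdjoin s, y ≠ 0 → f (x / y) = f x / f y := by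
    intro x hx y hy hy0
    have hfy : f y ≠ 0 := hfne0 y hy hy0
    by_cases hx0 : x = 0
    · subst hx0
      rw [zero_div, hf0, zero_div]
    by_cases hxy : x = y
    · subst hxy
      rw [div_self hx0, hf1, div_self hfy]
    · have hxy' : x - y ≠ 0 := sub_ne_zero.mpr hxy
      have huK : (x + y) / (x - y) ∈ ratAdjoin s :=
        hmem_div _ (hmem_add x hx y hy) _ (hmem_sub x hx y hy)
      set u := (x + y) / (x - y) with hu
      have hu1 : u ≠ 1 := by
        intro h
        rw [hu, div_eq_one_iff_eq hxy'] at h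
        apply hy0
        have : (2 : ℂ) * y = 0 := by linear_combination h
        simpa using this
      have hfu : f u = (f x + f y) / (f x - f y) := (hSD x hx y hy hxy).2
      have hfu1 : f u ≠ 1 := by
        have := (hSD u huK 1 h1K hu1).1
        rwa [hf1] at this
      have e := (hSD u huK 1 h1K hu1).2
      rw [hf1] at e
      have hu1' : u - 1 ≠ 0 := sub_ne_zero.mpr hu1
      have hxu : (u + 1) / (u - 1) = x / y := by
        rw [div_eq_div_iff hu1' hy0, hu]
        field_simp
        ring
      rw [hxu] at e
      rw [e, hfu]
      have hAB : f x - f y ≠ 0 := sub_ne_zero.mpr (hSD x hx y hy hxy).1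
      have hY : (f x + f y) / (f x - f y) - 1 ≠ 0 := by
        rw [← hfu]
        exact sub_ne_zero.mpr hfu1
      rw [div_eq_div_iff hY hfy]
      field_simp
      ring
  -- multiplicativity
  have hmul : ∀ x ∈ ratAdjoin s, ∀ y ∈ ratAdjoin s, f (x * y) = f x * f y := by
    intro x hx y hy
    by_cases hx0 : x = 0
    · subst hx0; rw [zero_mul, hf0, zero_mul]
    by_cases hy0 : y = 0
    · subst hy0; rw [mul_zero, hf0, mul_zero]
    have hyinvK : y⁻¹ ∈ ratAdjoin s := hmem_inv y hy
    have hyinv0 : y⁻¹ ≠ 0 := inv_ne_zero hy0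
    have h1 : f (x * y) = f x / f y⁻¹ := by
      have hxy : x * y = x / y⁻¹ := by field_simp
      rw [hxy, hdiv x hx y⁻¹ hyinvK hyinv0]
    have h2 : f y⁻¹ = 1 / f y := by
      rw [← hf1, ← hdiv 1 h1K y hy hy0, one_div]
    rw [h1, h2]
    field_simp
  -- the main functional equation, cleared of denominators
  have hE : ∀ x ∈ ratAdjoin s, ∀ y ∈ ratAdjoin s,
      f (x + y) * (f x - f y) = f (x - y) * (f x + f y) := by
    intro x hx y hy
    by_cases hxy : x = y
    · subst hxy
      simp [hf0]
    have hxy' : x - y ≠ 0 := sub_ne_zero.mpr hxy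
    by_cases hxy0 : x + y = 0
    · have hyx : y = -x := by linear_combination hxy0
      subst hyx
      rw [hxy0, hf0, zero_mul, hodd x hx]
      ring
    · have e := (hSD x hx y hy hxy).2
      rw [hdiv _ (hmem_add x hx y hy) _ (hmem_sub x hx y hy) hxy'] at e
      have h1 : f (x - y) ≠ 0 := hfne0 _ (hmem_sub x hx y hy) hxy'
      have h2 : f x - f y ≠ 0 := sub_ne_zero.mpr (hSD x hx y hy hxy).1
      rw [div_eq_div_iff h1 h2] at e
      linear_combination e
  -- memberships of small numerals
  have h4K : (4:ℂ) ∈ ratAdjoin s := by simpa using hmem_rat 4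
  have h5K : (5:ℂ) ∈ ratAdjoin s := by simpa using hmem_rat 5
  have h6K : (6:ℂ) ∈ ratAdjoin s := by simpa using hmem_rat 6
  have h9K : (9:ℂ) ∈ ratAdjoin s := by simpa using hmem_rat 9
  have h10K : (10:ℂ) ∈ ratAdjoin s := by simpa using hmem_rat 10
  have h16K : (16:ℂ) ∈ ratAdjoin s := by simpa using hmem_rat 16
  -- values at small numerals
  have hf4 : f 4 = f 2 * f 2 := by have h := hmul 2 h2K 2 h2K; norm_num at h; exact h
  have hf6 : f 6 = f 2 * f 3 := by have h := hmul 2 h2K 3 h3K; norm_num at h; exact h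
  have hf8 : f 8 = f 2 * f 4 := by have h := hmul 2 h2K 4 h4K; norm_num at h; exact h
  have hf9 : f 9 = f 3 * f 3 := by have h := hmul 3 h3K 3 h3K; norm_num at h; exact h
  have hf16 : f 16 = f 4 * f 4 := by have h := hmul 4 h4K 4 h4K; norm_num at h; exact h
  have hf8' : f 8 = f 2 ^ 3 := by rw [hf8, hf4]; ring
  have hf9' : f 9 = f 3 ^ 2 := by rw [hf9]; ring
  have hf16' : f 16 = f 2 ^ 4 := by rw [hf16, hf4]; ring
  have hc0 : f 2 ≠ 0 := hfne0 2 h2K two_ne_zero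
  have ha0 : f 3 ≠ 0 := hfne0 3 h3K (by norm_num)
  have ha1 : f 3 ≠ 1 := by
    have := (hSD 3 h3K 1 h1K (by norm_num)).1; rwa [hf1] at this
  have ham1 : f 3 ≠ -1 := by
    have := (hSD 3 h3K (-1) (hmem_neg 1 h1K) (by norm_num)).1; rwa [hfm1] at this
  have hac : f 3 ≠ f 2 := (hSD 3 h3K 2 h2K (by norm_num)).1
  have hf5ne : f 5 ≠ 0 := hfne0 5 h5K (by norm_num)
  have E31 := hE 3 h3K 1 h1K
  have E91 := hE 9 h9K 1 h1K
  have E106 := hE 10 h10K 6 h6K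
  have E32 := hE 3 h3K 2 h2K
  rw [hf1] at E31 E91
  norm_num at E31 E91 E106 E32
  rw [hf1, one_mul] at E32
  -- E31 : f 4 * (f 3 - 1) = f 2 * (f 3 + 1)
  have hA : f 2 * (f 3 - 1) = f 3 + 1 := by
    have h : f 2 * (f 2 * (f 3 - 1)) = f 2 * (f 3 + 1) := by
      linear_combination E31 - (f 3 - 1) * hf4
    exact mul_left_cancel₀ hc0 h
  have hB : f 3 + f 2 ≠ 0 := by
    intro h
    rw [h] at E32
    rcases mul_eq_zero.mp E32 with h' | h'
    · exact hf5ne h'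
    · exact sub_ne_zero.mpr hac h'
  have hC : f 3 ^ 2 + 1 ≠ 0 := by
    have heq : f 3 ^ 2 + 1 = (f 3 + f 2) * (f 3 - 1) := by linear_combination -hA
    rw [heq]
    exact mul_ne_zero hB (sub_ne_zero.mpr ha1)
  rw [hf9', hf8'] at E91
  rw [hf16', hf6, hf4] at E106
  -- E91 : f 10 * (f 3 ^ 2 - 1) = f 2 ^ 3 * (f 3 ^ 2 + 1)
  -- E106 : f 2 ^ 4 * (f 10 - f 2 * f 3) = f 2 * f 2 * (f 10 + f 2 * f 3)
  have hF : f 10 * (f 2 ^ 2 - 1) = f 2 * f 3 * (f 2 ^ 2 + 1) := by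
    have h : f 2 ^ 2 * (f 10 * (f 2 ^ 2 - 1)) = f 2 ^ 2 * (f 2 * f 3 * (f 2 ^ 2 + 1)) := by
      linear_combination E106
    exact mul_left_cancel₀ (pow_ne_zero 2 hc0) h
  have hElim2 : f 3 * (f 2 ^ 2 + 1) * (f 3 ^ 2 - 1) = f 2 ^ 2 * (f 3 ^ 2 + 1) * (f 2 ^ 2 - 1) := by
    have h : f 2 * (f 3 * (f 2 ^ 2 + 1) * (f 3 ^ 2 - 1))
        = f 2 * (f 2 ^ 2 * (f 3 ^ 2 + 1) * (f 2 ^ 2 - 1)) := by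
      linear_combination (f 2 ^ 2 - 1) * E91 - (f 3 ^ 2 - 1) * hF
    exact mul_left_cancel₀ hc0 h
  have key : 2 * f 3 * (f 3 + 1) * (f 3 ^ 2 + 1) ^ 2 * (f 3 - 3) = 0 := by
    linear_combination (f 3 - 1) ^ 4 * hElim2 -
      ((-(f 3 ^ 2 + 1)) * ((f 2 * (f 3 - 1)) ^ 2 + (f 3 + 1) ^ 2) * (f 2 * (f 3 - 1) + (f 3 + 1))
        + (f 3 - 1) ^ 2 * (f 3 ^ 3 + f 3 ^ 2 - f 3 + 1) * (f 2 * (f 3 - 1) + (f 3 + 1))) * hA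
  have ha3 : f 3 = 3 := by
    have hap1 : f 3 + 1 ≠ 0 := by
      intro h; exact ham1 (by linear_combination h)
    have hprod : 2 * f 3 * (f 3 + 1) * (f 3 ^ 2 + 1) ^ 2 ≠ 0 :=
      mul_ne_zero (mul_ne_zero (mul_ne_zero two_ne_zero ha0) hap1) (pow_ne_zero 2 hC)
    have h := (mul_eq_zero.mp key).resolve_left hprod
    linear_combination h
  have hc2 : f 2 = 2 := by
    linear_combination hA / 2 + ((1 - f 2) / 2) * ha3
  -- the square identity
  have hsq : ∀ x ∈ ratAdjoin s, f (x + 1) ^ 2 = (f x + 1) ^ 2 := by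
    intro x hx
    by_cases hx0 : x = 0
    · subst hx0; norm_num [hf0, hf1]
    by_cases hx1 : x = 1
    · subst hx1; norm_num [hf1, hc2]
    by_cases hxm1 : x = -1
    · subst hxm1; norm_num [hf0, hfm1]
    by_cases hxi : x * x = -1
    · have hxx : (x + 1) * (x + 1) = 2 * x := by linear_combination hxi
      have hx1K := hmem_add x hx 1 h1K
      have h1 : f ((x + 1) * (x + 1)) = f (x + 1) * f (x + 1) := hmul _ hx1K _ hx1K
      rw [hxx] at h1
      have h2 : f (2 * x) = f 2 * f x := hmul 2 h2K x hx
      have h3 : f (x * x) = f x * f x := hmul x hx x hx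
      rw [hxi, hfm1] at h3
      rw [h2, hc2] at h1
      linear_combination -h1 + h3
    · have hxK1 := hmem_add x hx 1 h1K
      have hxM1 := hmem_sub x hx 1 h1K
      have hxx : x * x ∈ ratAdjoin s := hmem_mul x hx x hx
      have h1 : f (x + 1) * (f x - 1) = f (x - 1) * (f x + 1) := by
        have h := hE x hx 1 h1K; rwa [hf1] at h
      have hfxx : f (x * x) = f x * f x := hmul x hx x hx
      have h2 : f (x * x + 1) * (f x * f x - 1) = f (x + 1) * f (x - 1) * (f x * f x + 1) := by
        have h := hE (x * x) hxx 1 h1K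
        rw [hf1, hfxx] at h
        have hfac : x * x - 1 = (x + 1) * (x - 1) := by ring
        rw [hfac, hmul _ hxK1 _ hxM1] at h
        exact h
      have h2xK : 2 * x ∈ ratAdjoin s := hmem_mul 2 h2K x hx
      have hxx1K : x * x + 1 ∈ ratAdjoin s := hmem_add _ hxx 1 h1K
      have h3 : f (x + 1) ^ 2 * (f (x * x + 1) - 2 * f x)
          = f (x - 1) ^ 2 * (f (x * x + 1) + 2 * f x) := by
        have h := hE (x * x + 1) hxx1K (2 * x) h2xK
        have hsum : x * x + 1 + 2 * x = (x + 1) * (x + 1) := by ring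
        have hdiff : x * x + 1 - 2 * x = (x - 1) * (x - 1) := by ring
        rw [hsum, hdiff, hmul _ hxK1 _ hxK1, hmul _ hxM1 _ hxM1, hmul 2 h2K x hx, hc2] at h
        linear_combination h
      have ha1' : f x - 1 ≠ 0 := by
        have := (hSD x hx 1 h1K hx1).1; rw [hf1] at this; exact sub_ne_zero.mpr this
      have ham1' : f x + 1 ≠ 0 := by
        intro h
        have := (hSD x hx (-1) (hmem_neg 1 h1K) hxm1).1
        rw [hfm1] at this
        exact this (by linear_combination h)
      have ha0' : f x ≠ 0 := hfne0 x hx hx0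
      have hs1' : f (x + 1) ≠ 0 :=
        hfne0 _ hxK1 (by intro h; apply hxm1; linear_combination h)
      have hCx : f x * f x + 1 ≠ 0 := by
        intro h
        have := (hSD (x * x) hxx (-1) (hmem_neg 1 h1K) hxi).1
        rw [hfm1, hfxx] at this
        exact this (by linear_combination h)
      have stepi : f (x * x + 1) * (f x + 1) ^ 2 = f (x + 1) ^ 2 * (f x * f x + 1) := by
        have h : (f x - 1) * (f (x * x + 1) * (f x + 1) ^ 2)
            = (f x - 1) * (f (x + 1) ^ 2 * (f x * f x + 1)) := by
          linear_combination (f x + 1) * h2 - f (x + 1) * (f x * f x + 1) * h1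
        exact mul_left_cancel₀ ha1' h
      have stepii : (f (x * x + 1) - 2 * f x) * (f x + 1) ^ 2
          = (f x - 1) ^ 2 * (f (x * x + 1) + 2 * f x) := by
        have h : f (x + 1) ^ 2 * ((f (x * x + 1) - 2 * f x) * (f x + 1) ^ 2)
            = f (x + 1) ^ 2 * ((f x - 1) ^ 2 * (f (x * x + 1) + 2 * f x)) := by
          linear_combination (f x + 1) ^ 2 * h3
            - (f (x * x + 1) + 2 * f x) * (f (x - 1) * (f x + 1) + f (x + 1) * (f x - 1)) * h1
        exact mul_left_cancel₀ (pow_ne_zero 2 hs1') h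
      have hFval : f (x * x + 1) = f x * f x + 1 := by
        have h4 : (4 * f x) * f (x * x + 1) = (4 * f x) * (f x * f x + 1) := by
          linear_combination stepii
        exact mul_left_cancel₀ (mul_ne_zero (by norm_num) ha0') h4
      have h5 : (f x * f x + 1) * (f (x + 1) ^ 2) = (f x * f x + 1) * ((f x + 1) ^ 2) := by
        linear_combination (f x + 1) ^ 2 * hFval - stepi
      exact mul_left_cancel₀ hCx h5
  -- the shift identity
  have hplus1 : ∀ x ∈ ratAdjoin s, f (x + 1) = f x + 1 := by
    intro x hx
    have hxK1 := hmem_add x hx 1 h1K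
    by_cases ham : f x = -1
    · have hxeq : x = -1 := hinj x hx (-1) (hmem_neg 1 h1K) (by rw [ham, hfm1])
      subst hxeq
      norm_num [hf0, hfm1]
    · have h := hsq x hx
      have hfac : (f (x + 1) - (f x + 1)) * (f (x + 1) + (f x + 1)) = 0 := by
        linear_combination h
      rcases mul_eq_zero.mp hfac with h' | h'
      · linear_combination h'
      · exfalso
        by_cases hx0 : x = 0
        · subst hx0
          norm_num [hf0, hf1] at h'
        · have hx2K : x + 1 + 1 ∈ ratAdjoin s := hmem_add _ hxK1 1 h1K
          have h2 := hsq (x + 1) hxK1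
          have hfac2 : (f (x + 1 + 1) - f x) * (f (x + 1 + 1) + f x) = 0 := by
            linear_combination h2 + (f (x + 1) + 1 - f x) * h'
          rcases mul_eq_zero.mp hfac2 with h3 | h3
          · have heq : x + 1 + 1 = x := hinj _ hx2K x hx (by linear_combination h3)
            have : (2 : ℂ) = 0 := by linear_combination heq
            norm_num at this
          · have hmx : f (x + 1 + 1) = f (-x) := by
              rw [hodd x hx]; linear_combination h3
            have heq : x + 1 + 1 = -x := hinj _ hx2K (-x) (hmem_neg x hx) hmx
            have hxm1' : x = -1 := by linear_combination heq / 2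
            rw [hxm1', hfm1] at ham
            exact ham rfl
  -- values at natural numbers, integers, rationals
  have hKnat : ∀ n : ℕ, ((n : ℂ)) ∈ ratAdjoin s := by
    intro n
    have := hmem_rat (n : ℚ)
    simpa using this
  have hKint : ∀ m : ℤ, ((m : ℂ)) ∈ ratAdjoin s := by
    intro m
    have := hmem_rat (m : ℚ)
    simpa using this
  have hnat : ∀ n : ℕ, f n = n := by
    intro n
    induction n with
    | zero => simpa using hf0
    | succ n ih =>
      have h := hplus1 (n : ℂ) (hKnat n)
      push_cast
      rw [h, ih]
  have hint : ∀ m : ℤ, f m = m := by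
    intro m
    obtain ⟨n, rfl | rfl⟩ := m.eq_nat_or_neg
    · push_cast
      exact hnat n
    · push_cast
      rw [hodd _ (hKnat n), hnat n]
  have hrat : ∀ q : ℚ, f q = q := by
    intro q
    have hden : ((q.den : ℂ)) ≠ 0 := Nat.cast_ne_zero.mpr q.den_nz
    have hq : (q : ℂ) = (q.num : ℂ) / (q.den : ℂ) := by rw [Rat.cast_def]
    rw [hq, hdiv _ (hKint q.num) _ (hKnat q.den) hden, hint q.num, hnat q.den]
  -- rational shifts
  have haddq : ∀ x ∈ ratAdjoin s, ∀ q : ℚ, f (x + q) = f x + q := by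
    intro x hx q
    by_cases hq0 : q = 0
    · subst hq0; simp
    have hqC : (q : ℂ) ≠ 0 := by exact_mod_cast hq0
    by_cases hx0 : x = 0
    · subst hx0; simp [hf0, hrat q]
    · have hxq : x + q = (q : ℂ) * (x / q + 1) := by field_simp
      rw [hxq, hmul _ (hmem_rat q) _ (hmem_add _ (hmem_div x hx _ (hmem_rat q)) 1 h1K),
        hrat q, hplus1 _ (hmem_div x hx _ (hmem_rat q)), hdiv x hx _ (hmem_rat q) hqC, hrat q]
      field_simp
  -- the general form of f on K
  have hgen : ∀ a b : ℚ, f ((a : ℂ) + (b : ℂ) * s) = (a : ℂ) + (b : ℂ) * f s := by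
    intro a b
    by_cases hb : b = 0
    · subst hb; simp [hrat a]
    · have hbC : (b : ℂ) ≠ 0 := by exact_mod_cast hb
      have heq : (a : ℂ) + (b : ℂ) * s = (b : ℂ) * (s + ((a / b : ℚ) : ℂ)) := by
        push_cast
        field_simp
        ring
      rw [heq, hmul _ (hmem_rat b) _ (hmem_add s hmem_s _ (hmem_rat (a / b))),
        haddq s hmem_s (a / b), hrat b]
      push_cast
      field_simp
      ring
  -- f s is s or -s
  have hfs2 : f s * f s = (d : ℂ) := by
    have h : f (s * s) = f s * f s := hmul s hmem_s s hmem_s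
    have hss : s * s = ((d : ℚ) : ℂ) := by push_cast; linear_combination hs
    rw [hss, hrat ((d : ℚ))] at h
    exact_mod_cast h.symm
  obtain ⟨p, q, hpq⟩ := hmap s hmem_s
  have hsq2 : ((p : ℂ) + (q : ℂ) * s) * ((p : ℂ) + (q : ℂ) * s) = (d : ℂ) := by
    rw [← hpq]; exact hfs2
  have hlin2 := hlin (p ^ 2 + q ^ 2 * d - d) (2 * p * q)
    (by push_cast; linear_combination hsq2 - (q : ℂ) ^ 2 * hs)
  have hfs : f s = s ∨ f s = -s := by
    have hpq0 : p * q = 0 := by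
      have := hlin2.2
      linarith [this]
    rcases mul_eq_zero.mp hpq0 with hp | hq
    · -- p = 0, so q^2 = 1
      have h1 := hlin2.1
      have hdQ' : (d : ℚ) ≠ 0 := hdQ
      have hq2 : (q - 1) * (q + 1) * (d:ℚ) = 0 := by
        rw [hp] at h1
        linear_combination h1
      rcases mul_eq_zero.mp hq2 with h2 | h2
      · rcases mul_eq_zero.mp h2 with h3 | h3
        · left
          rw [hpq, hp]
          have : q = 1 := by linarith
          rw [this]
          norm_num
        · right
          rw [hpq, hp]
          have : q = -1 := by linarith
          rw [this]
          push_cast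
          ring
      · exact absurd h2 hdQ'
    · exfalso
      apply hd
      refine ⟨p, ?_⟩
      have h1 := hlin2.1
      rw [hq] at h1
      linear_combination h1
  rcases hfs with hid | hconj
  · left
    rintro z ⟨a, b, rfl⟩
    rw [hgen a b, hid]
  · right
    intro a b
    rw [hgen a b, hconj]
    ring
end

section
/- Let F be a subfield of ℂ containing the Gaussian rationals ℚ(i) = { a + b·i : a, b ∈ ℚ }, and let f : F → F be an SD map that is continuous (with respect to the topology on F induced from ℂ). Then either f is the identity map (f(z) = z for all z ∈ F) or f is complex conjugation restricted to F (f(z) = z̄ for all z ∈ F). -/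
/-!
An SD map fixes `0` and `1` and is multiplicative, because `t ↦ (t + 1) / (t - 1)` is an
involution carrying `x / y` to `(x + y) / (x - y)`. Applying the defining relation to `x ± 1` and
`x ± 2` shows that `f (x + 1) = f x + 1` unless `f x` is a root of `(X² - 2)(X² - X + 1)`; by
injectivity this excludes only finitely many `x`, and continuity removes the exceptions. So `f`
is a continuous ring endomorphism: it fixes `ℚ` and sends `i` to `±i`, hence agrees with the
identity or with conjugation on the dense subset `ℚ(i)`.
-/

/-- A function `f : F → F` on a field `F` is an *SD map* if for all `x ≠ y` one has
`f x ≠ f y` and `f ((x+y)/(x-y)) = (f x + f y) / (f x - f y)`. -/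
def IsSDMap {F : Type*} [Field F] (f : F → F) : Prop :=
  ∀ ⦃x y : F⦄, x ≠ y →
    f x ≠ f y ∧ f ((x + y) / (x - y)) = (f x + f y) / (f x - f y)

private lemma add_div_sub_add_one_div_sub_one {K : Type*} [Field K] [NeZero (2 : K)] {a b : K}
    (hab : a - b ≠ 0) (hb : b ≠ 0) :
    ((a + b) / (a - b) + 1) / ((a + b) / (a - b) - 1) = a / b := by
  have h2b : (a + b) - (a - b) ≠ 0 := by
    rw [show (a + b) - (a - b) = 2 * b by ring]; exact mul_ne_zero two_ne_zero hb
  rw [div_add_one hab, div_sub_one hab, div_div_div_cancel_right₀ hab]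
  field_simp
  ring

namespace IsSDMap

variable {K : Type*} [Field K] {f : K → K}

theorem injective (hf : IsSDMap f) : Function.Injective f := fun _ _ h =>
  by_contra fun hxy => (hf hxy).1 h

theorem sub_ne_zero_of_ne (hf : IsSDMap f) {x y : K} (h : x ≠ y) : f x - f y ≠ 0 :=
  sub_ne_zero.2 (hf h).1

variable [CharZero K]

theorem map_zero (hf : IsSDMap f) : f 0 = 0 := by
  have h1 := (hf (one_ne_zero (α := K))).2
  have h2 := (hf (two_ne_zero (α := K))).2
  simp only [add_zero, sub_zero, div_self (two_ne_zero (α := K)), div_one] at h1 h2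
  rw [h1, div_eq_div_iff (hf.sub_ne_zero_of_ne one_ne_zero)
    (hf.sub_ne_zero_of_ne two_ne_zero)] at h2
  have h : f 0 * (2 * (f 2 - f 1)) = 0 := by linear_combination h2
  simpa [hf.sub_ne_zero_of_ne (show (2 : K) ≠ 1 by norm_num)] using h

theorem map_ne_zero (hf : IsSDMap f) {x : K} (hx : x ≠ 0) : f x ≠ 0 := by
  simpa [hf.map_zero] using (hf hx).1

theorem map_one (hf : IsSDMap f) : f 1 = 1 := by
  simpa [hf.map_zero, div_self (hf.map_ne_zero one_ne_zero)] using (hf (one_ne_zero (α := K))).2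

theorem map_neg_one (hf : IsSDMap f) : f (-1) = -1 := by
  simpa [hf.map_zero, hf.map_one] using (hf (zero_ne_one (α := K))).2

theorem map_div (hf : IsSDMap f) (x : K) {y : K} (hy : y ≠ 0) : f (x / y) = f x / f y := by
  rcases eq_or_ne x y with rfl | hxy
  · rw [div_self hy, div_self (hf.map_ne_zero hy), hf.map_one]
  have hu : (x + y) / (x - y) ≠ 1 := by
    rw [Ne, div_eq_one_iff_eq (sub_ne_zero.2 hxy)]
    intro h
    exact hy (by linear_combination h / 2)
  have h := (hf hu).2
  rwa [hf.map_one, (hf hxy).2, add_div_sub_add_one_div_sub_one (sub_ne_zero.2 hxy) hy,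
    add_div_sub_add_one_div_sub_one (hf.sub_ne_zero_of_ne hxy) (hf.map_ne_zero hy)] at h

theorem map_mul (hf : IsSDMap f) (x y : K) : f (x * y) = f x * f y := by
  rcases eq_or_ne y 0 with rfl | hy
  · simp [hf.map_zero]
  · rw [← div_mul_cancel₀ (f (x * y)) (hf.map_ne_zero hy), ← hf.map_div _ hy,
      mul_div_cancel_right₀ x hy]

theorem map_add_mul_map_sub (hf : IsSDMap f) {x y : K} (hxy : x ≠ y) :
    f (x + y) * (f x - f y) = f (x - y) * (f x + f y) := by
  have h := (hf hxy).2
  rw [hf.map_div _ (sub_ne_zero.2 hxy), div_eq_div_iff (hf.map_ne_zero (sub_ne_zero.2 hxy))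
    (hf.sub_ne_zero_of_ne hxy)] at h
  linear_combination h

theorem map_two (hf : IsSDMap f) : f 2 = 2 := by
  have h21 := hf.map_add_mul_map_sub (show (2 : K) ≠ 1 by norm_num)
  have h32 := hf.map_add_mul_map_sub (show (3 : K) ≠ 2 by norm_num)
  have h41 := hf.map_add_mul_map_sub (show (4 : K) ≠ 1 by norm_num)
  have h4 : f 4 = f 2 * f 2 := by rw [← hf.map_mul]; norm_num
  norm_num [hf.map_one, h4] at h21 h32 h41
  have hc0 : f 2 ≠ 0 := hf.map_ne_zero two_ne_zero
  have hc1 : f 2 + 1 ≠ 0 := by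
    simpa [hf.map_neg_one, sub_eq_add_neg] using
      hf.sub_ne_zero_of_ne (show (2 : K) ≠ -1 by norm_num)
  have hc2 : f 2 * f 2 + 1 ≠ 0 := by
    simpa [hf.map_neg_one, h4, sub_eq_add_neg] using
      hf.sub_ne_zero_of_ne (show (4 : K) ≠ -1 by norm_num)
  -- eliminating `f 3` and `f 5`
  have h : 2 * f 2 * (f 2 + 1) * (f 2 * f 2 + 1) * (f 2 - 2) = 0 := by
    linear_combination (f 2 - 1) ^ 2 * (-(f 2 * f 2 - 1) * h32 + (f 3 - f 2) * h41) +
      (-(f 2 - 1) * (f 2 * f 2 - 1) +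
        (f 2 * f 2 + 1) * (-f 2 * f 2 + 2 * f 2 + 1 + f 3 * (f 2 - 1))) * h21
  simpa [hc0, hc1, hc2, sub_eq_zero] using h

theorem map_add_one_eq_or (hf : IsSDMap f) {x : K} (h0 : x ≠ 0) (h1 : x ≠ 1) (h2 : x ≠ 2) :
    (f x - 1) * f (x + 1) = 1 ∨ f (x + 1) = f x + 1 := by
  have E1 := hf.map_add_mul_map_sub h1
  have E2 := hf.map_add_mul_map_sub (show x + 1 ≠ 1 by simpa using h0)
  have E3 := hf.map_add_mul_map_sub (show x - 1 ≠ 1 by contrapose! h2; linear_combination h2)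
  have E4 := hf.map_add_mul_map_sub h2
  rw [hf.map_one, add_sub_cancel_right, add_assoc, one_add_one_eq_two] at E2
  rw [hf.map_one, sub_add_cancel, sub_sub, one_add_one_eq_two] at E3
  rw [hf.map_one] at E1
  rw [hf.map_two] at E4
  -- eliminating `f (x - 2)`, `f (x - 1)` and `f (x + 2)`
  have h : -4 * f x * (((f x - 1) * f (x + 1) - 1) * (f (x + 1) - (f x + 1))) = 0 := by
    linear_combination (f x + 1) * (-((f (x - 1) + 1) * (f x - 2)) * E2 +
      -((f (x + 1) - 1) * (f x + 2)) * E3 + ((f (x + 1) - 1) * (f (x - 1) + 1)) * E4) +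
      (f x * ((f x - 2) * (f (x + 1) + 1) - (f x + 2) * (f (x + 1) - 1))) * E1
  simpa [hf.map_ne_zero h0, sub_eq_zero] using h

theorem map_sq_eq_of_map_add_one_ne (hf : IsSDMap f) {x : K} (hm2 : x ≠ -2) (hm1 : x ≠ -1)
    (h0 : x ≠ 0) (h1 : x ≠ 1) (h2 : x ≠ 2) (hx : f (x + 1) ≠ f x + 1) :
    (f x ^ 2 - 2) * (f x ^ 2 - f x + 1) = 0 := by
  have hP := (hf.map_add_one_eq_or h0 h1 h2).resolve_right hx
  have E := hf.map_add_mul_map_sub (show x + 1 ≠ 1 by simpa using h0)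
  rw [hf.map_one, add_sub_cancel_right, add_assoc, one_add_one_eq_two] at E
  rcases hf.map_add_one_eq_or (x := x + 1) (by contrapose! hm1; linear_combination hm1)
    (by simpa using h0) (by contrapose! h1; linear_combination h1) with hQ | hQ
  · rw [add_assoc, one_add_one_eq_two] at hQ
    have hPA : f (x + 1) = -f x := by linear_combination hQ - E - hP
    rw [hPA] at hP
    linear_combination (-(f x ^ 2 - 2)) * hP
  · rw [add_assoc, one_add_one_eq_two] at hQ
    have hP1 : f (x + 1) + 1 ≠ 0 := by
      simpa [hf.map_neg_one, sub_eq_add_neg] using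
        hf.sub_ne_zero_of_ne (show x + 1 ≠ -1 by contrapose! hm2; linear_combination hm2)
    have hPA : f (x + 1) = f x + 1 := by
      have h : (f (x + 1) + 1) * (f (x + 1) - (f x + 1)) = 0 := by
        rw [hQ] at E; linear_combination E
      simpa [hP1, sub_eq_zero] using h
    rw [hPA] at hP
    linear_combination (f x ^ 2 - f x + 1) * hP

open Polynomial in
theorem finite_setOf_map_add_one_ne (hf : IsSDMap f) : {x | f (x + 1) ≠ f x + 1}.Finite := by
  set p : K[X] := (X ^ 2 - C 2) * (X ^ 2 - X + 1)
  have hp : p ≠ 0 := fun h => by simpa [p] using congrArg (eval 0) h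
  refine (Set.toFinite {-2, -1, 0, 1, 2}).union
    ((finite_setOfPred_isRoot hp).preimage hf.injective.injOn) |>.subset fun x hx => ?_
  by_contra hx'
  simp only [Set.mem_union, Set.mem_insert_iff, Set.mem_singleton_iff, Set.mem_preimage,
    Set.mem_ofPred_eq, not_or] at hx'
  obtain ⟨⟨hm2, hm1, h0, h1, h2⟩, hroot⟩ := hx'
  exact hroot (by simpa [p] using hf.map_sq_eq_of_map_add_one_ne hm2 hm1 h0 h1 h2 hx)

section Continuous

variable [TopologicalSpace K] [T2Space K] [ContinuousAdd K] [PerfectSpace K]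

theorem map_add_one (hf : IsSDMap f) (hcont : Continuous f) (x : K) : f (x + 1) = f x + 1 :=
  congrFun ((hcont.comp (continuous_add_const 1)).ext_on
    (dense_univ.sdiff_finite hf.finite_setOf_map_add_one_ne) ((continuous_add_const 1).comp hcont)
    fun _ hy => not_not.1 hy.2) x

theorem map_add (hf : IsSDMap f) (hcont : Continuous f) (x y : K) : f (x + y) = f x + f y := by
  rcases eq_or_ne y 0 with rfl | hy
  · rw [add_zero, hf.map_zero, add_zero]
  calc f (x + y) = f (y * (x / y + 1)) := by rw [mul_add, mul_div_cancel₀ x hy, mul_one]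
    _ = f x + f y := by
      rw [hf.map_mul, hf.map_add_one hcont, hf.map_div x hy, mul_add,
        mul_div_cancel₀ _ (hf.map_ne_zero hy), mul_one]

def toRingHom (hf : IsSDMap f) (hcont : Continuous f) : K →+* K where
  toFun := f
  map_one' := hf.map_one
  map_mul' := hf.map_mul
  map_zero' := hf.map_zero
  map_add' := hf.map_add hcont

end Continuous

end IsSDMap

open Complex Topology

theorem Complex.denseRange_ratCast_add_ratCast_mul_I :
    DenseRange fun p : ℚ × ℚ => (p.1 : ℂ) + p.2 * I := by
  have h := equivRealProdCLM.symm.toHomeomorph.surjective.denseRange.comp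
    (Rat.denseRange_cast.prodMap Rat.denseRange_cast) equivRealProdCLM.symm.continuous
  convert h using 2 with p
  simp [equivRealProdCLM_symm_apply]

namespace Subfield

variable {F : Subfield ℂ}

instance perfectSpace : PerfectSpace F :=
  have : ContinuousSMul ℚ F := IsInducing.subtypeVal.continuousSMul continuous_id rfl
  perfectSpace_of_module ℚ F

theorem I_mem_of_forall_gaussianRat_mem (hQi : ∀ a b : ℚ, (a : ℂ) + b * I ∈ F) : I ∈ F := by
  simpa using hQi 0 1

theorem dense_gaussianRat (hQi : ∀ a b : ℚ, (a : ℂ) + b * I ∈ F) :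
    Dense {z : F | ∃ a b : ℚ, (z : ℂ) = a + b * I} := by
  refine IsInducing.subtypeVal.dense_iff.2 fun x => ?_
  refine _root_.closure_mono ?_ (denseRange_ratCast_add_ratCast_mul_I (x : ℂ))
  rintro _ ⟨⟨a, b⟩, rfl⟩
  exact ⟨⟨_, hQi a b⟩, ⟨a, b, rfl⟩, rfl⟩

theorem ringHom_ext_of_continuous (hQi : ∀ a b : ℚ, (a : ℂ) + b * I ∈ F) {ψ χ : F →+* ℂ}
    (hψ : Continuous ψ) (hχ : Continuous χ)
    (hI : ψ ⟨I, I_mem_of_forall_gaussianRat_mem hQi⟩ =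
      χ ⟨I, I_mem_of_forall_gaussianRat_mem hQi⟩) :
    ψ = χ := by
  refine DFunLike.coe_injective (hψ.ext_on (dense_gaussianRat hQi) hχ ?_)
  rintro z ⟨a, b, hz⟩
  obtain rfl : z = a + b * ⟨I, I_mem_of_forall_gaussianRat_mem hQi⟩ :=
    Subtype.ext (by simpa using hz)
  simp [hI]

theorem eq_subtype_or_eq_conj_comp_subtype (hQi : ∀ a b : ℚ, (a : ℂ) + b * I ∈ F)
    {ψ : F →+* ℂ} (hψ : Continuous ψ) :
    ψ = F.subtype ∨ ψ = (starRingEnd ℂ).comp F.subtype := by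
  set i : F := ⟨I, I_mem_of_forall_gaussianRat_mem hQi⟩
  have hi : ψ i = I ∨ ψ i = -I := by
    rw [← (Commute.all _ _).sq_eq_sq_iff_eq_or_eq_neg, ← map_pow, I_sq]
    have : i ^ 2 = -1 := Subtype.ext (by simp [i])
    rw [this, map_neg, map_one]
  refine hi.imp (fun h => ringHom_ext_of_continuous hQi hψ continuous_subtype_val ?_)
    (fun h => ringHom_ext_of_continuous hQi hψ (continuous_conj.comp continuous_subtype_val) ?_)
  all_goals simpa [i] using h

end Subfield

theorem continuous_sd_map_subfield_containing_gaussian_rationals (F : Subfield ℂ)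
    (hQi : ∀ a b : ℚ, (a : ℂ) + (b : ℂ) * Complex.I ∈ F)
    (f : F → F) (hf : IsSDMap f) (hcont : Continuous f) :
    (∀ z : F, (f z : ℂ) = (z : ℂ)) ∨ (∀ z : F, (f z : ℂ) = (starRingEnd ℂ) (z : ℂ)) := by
  obtain h | h := F.eq_subtype_or_eq_conj_comp_subtype hQi
    (ψ := F.subtype.comp (hf.toRingHom hcont)) (continuous_subtype_val.comp hcont)
  exacts [.inl (RingHom.congr_fun h), .inr (RingHom.congr_fun h)]
end
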